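/- Let G be a finite connected simple graph with n vertices and m edges, all of whose vertices have degree at least 2 (so m ≥ n). Then for every complex number t, det(I_{2m} − t·U⁺) = (1 − t²)^{m−n} · det(I_n − t·A(G) + t²·(D − I_n)). (Intermediate identity in the proof of Theorem 5.1, obtained by combining Theorem 2.1 with the Ihara–Bass determinant formula; equivalently, the characteristic polynomial of U⁺ coincides with the reciprocal of the Ihara zeta function of G.) -/
import Mathlib

open Matrix SimpleGraph Polynomial

/-- The transition matrix `U` (over `ℝ`) of the discrete-time quantum walk on `G`, indexed
by darts: `U e f = 2 / deg (t f)` if `t f = o e` and `f ≠ e⁻¹`, `U e f = 2 / deg (t f) - 1`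
if `f = e⁻¹`, and `0` otherwise. -/
noncomputable def quantumUR {V : Type*} [Fintype V] (G : SimpleGraph V)
    [DecidableRel G.Adj] [DecidableEq V] : Matrix G.Dart G.Dart ℝ :=
  fun e f =>
    if f.toProd.2 = e.toProd.1 ∧ f ≠ e.symm then (2 : ℝ) / (G.degree f.toProd.2 : ℝ)
    else if f = e.symm then (2 : ℝ) / (G.degree f.toProd.2 : ℝ) - 1
    else 0

/-- The positive support of a real matrix, viewed as a matrix over a semiring `R`:
entry `1` where the original entry is positive, `0` otherwise. -/
noncomputable def posSupport {α : Type*} (R : Type*) [Zero R] [One R]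
    (F : Matrix α α ℝ) : Matrix α α R :=
  fun i j => if 0 < F i j then 1 else 0

set_option linter.unusedSectionVars false

namespace IBaux
variable {V : Type*} [Fintype V] [DecidableEq V] (G : SimpleGraph V) [DecidableRel G.Adj]

def K : Matrix G.Dart V ℂ := fun e v => if e.toProd.1 = v then 1 else 0
def L : Matrix G.Dart V ℂ := fun e v => if e.toProd.2 = v then 1 else 0
def J : Matrix G.Dart G.Dart ℂ := fun e f => if f = e.symm then 1 else 0

lemma LtK : (L G)ᵀ * K G = G.adjMatrix ℂ := by
  ext u v
  simp only [Matrix.mul_apply, transpose_apply, L, K, adjMatrix_apply, ite_mul, one_mul, zero_mul]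
  by_cases h : G.Adj u v
  · let d : G.Dart := ⟨(v, u), h.symm⟩
    rw [Finset.sum_eq_single d]
    · simp [d, h]
    · intro e _ hne
      split_ifs with h1 h2
      · exact absurd (Dart.ext e d (Prod.ext h2 h1)) hne
      · rfl
      · rfl
    · simp
  · rw [if_neg h, Finset.sum_eq_zero]
    intro e _
    split_ifs with h1 h2
    · exact absurd (h1 ▸ h2 ▸ e.adj.symm) h
    · rfl
    · rfl

lemma LtL : (L G)ᵀ * L G = Matrix.diagonal (fun v => (G.degree v : ℂ)) := by
  ext u v
  simp only [Matrix.mul_apply, transpose_apply, L, diagonal_apply, ite_mul, one_mul, zero_mul]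
  by_cases h : u = v
  · subst h
    simp only [if_pos rfl]
    have : ∀ e : G.Dart, (if e.toProd.2 = u then (if e.toProd.2 = u then (1:ℂ) else 0) else 0)
        = if e.toProd.2 = u then (1:ℂ) else 0 := by
      intro e; split_ifs with h1 <;> simp [h1]
    rw [Finset.sum_congr rfl (fun e _ => this e), Finset.sum_boole]
    congr 1
    rw [← G.dart_fst_fiber_card_eq_degree u]
    refine Finset.card_bij' (fun d _ => d.symm) (fun d _ => d.symm) ?_ ?_ ?_ ?_
    · intro a ha
      simp only [Finset.mem_filter, Finset.mem_univ, true_and, Dart.symm_toProd,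
        Prod.fst_swap, Prod.snd_swap] at ha ⊢
      exact ha
    · intro a ha
      simp only [Finset.mem_filter, Finset.mem_univ, true_and, Dart.symm_toProd,
        Prod.fst_swap, Prod.snd_swap] at ha ⊢
      exact ha
    · intro a _; simp
    · intro a _; simp
  · rw [if_neg h, Finset.sum_eq_zero]
    intro e _
    split_ifs with h1 h2
    · exact absurd (h1.symm.trans h2) h
    · rfl
    · rfl


lemma JK : J G * K G = L G := by
  ext e v
  have h1 : (J G * K G) e v = ∑ f, if f = e.symm then K G f v else 0 := by
    rw [Matrix.mul_apply]
    refine Finset.sum_congr rfl fun f _ => ?_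
    simp [J, ite_mul]
  rw [h1, Fintype.sum_ite_eq']
  simp [K, L]

lemma JJ : J G * J G = 1 := by
  ext e g
  have h1 : (J G * J G) e g = ∑ f, if f = e.symm then J G f g else 0 := by
    rw [Matrix.mul_apply]
    refine Finset.sum_congr rfl fun f _ => ?_
    by_cases hf : f = e.symm <;> simp [J, hf, ite_mul]
  rw [h1, Fintype.sum_ite_eq']
  simp [J, Matrix.one_apply, eq_comm]


lemma KLt (e f : G.Dart) : (K G * (L G)ᵀ) e f = if f.toProd.2 = e.toProd.1 then 1 else 0 := by
  have h1 : (K G * (L G)ᵀ) e f = ∑ v, if e.toProd.1 = v then (L G)ᵀ v f else 0 := by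
    rw [Matrix.mul_apply]
    refine Finset.sum_congr rfl fun v _ => ?_
    simp [K, ite_mul]
  rw [h1, Fintype.sum_ite_eq]
  simp [L, eq_comm]

lemma hB (hdeg : ∀ v : V, 2 ≤ G.degree v) :
    posSupport ℂ (quantumUR G) = K G * (L G)ᵀ - J G := by
  ext e f
  rw [Matrix.sub_apply, KLt]
  have hd : (0:ℝ) < (G.degree f.toProd.2 : ℝ) := by
    exact_mod_cast lt_of_lt_of_le (by norm_num) (hdeg f.toProd.2)
  by_cases h2 : f = e.symm
  · have ht : f.toProd.2 = e.toProd.1 := by subst h2; simp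
    have hU : quantumUR G e f = (2:ℝ) / (G.degree f.toProd.2 : ℝ) - 1 := by
      rw [quantumUR, if_neg (by tauto), if_pos h2]
    have hle : ¬ (0 < quantumUR G e f) := by
      rw [hU]
      simp only [not_lt, sub_nonpos]
      rw [div_le_one hd]
      exact_mod_cast hdeg f.toProd.2
    subst h2
    simp only [posSupport, J, if_pos rfl, if_neg hle, ht, if_pos ht]
    ring
  · by_cases h1 : f.toProd.2 = e.toProd.1
    · have hU : quantumUR G e f = (2:ℝ) / (G.degree f.toProd.2 : ℝ) := by
        rw [quantumUR, if_pos ⟨h1, h2⟩]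
      have hpos : 0 < quantumUR G e f := by rw [hU]; positivity
      simp [posSupport, J, hpos, h1, h2]
    · have hU : quantumUR G e f = 0 := by
        rw [quantumUR, if_neg (by tauto), if_neg h2]
      simp [posSupport, J, hU, h1, h2]


lemma detJ (t : ℂ) : (1 + t • J G).det = (1 - t ^ 2) ^ G.edgeFinset.card := by
  classical
  set σ : V ≃ Fin (Fintype.card V) := Fintype.equivFin V with hσ
  set p : G.Dart → Prop := fun e => (σ e.toProd.1 : ℕ) < (σ e.toProd.2 : ℕ) with hp
  have hne : ∀ e : G.Dart, (σ e.toProd.1 : ℕ) ≠ (σ e.toProd.2 : ℕ) := by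
    intro e h
    exact e.fst_ne_snd (σ.injective (Fin.val_injective h))
  have hps : ∀ e : G.Dart, p e.symm ↔ ¬ p e := by
    intro e
    have := hne e
    simp only [hp, Dart.symm_toProd, Prod.fst_swap, Prod.snd_swap]
    omega
  let PD := {e : G.Dart // p e}
  let ψ : G.Dart ≃ PD ⊕ PD :=
    { toFun := fun e => if h : p e then Sum.inl ⟨e, h⟩ else Sum.inr ⟨e.symm, (hps e).mpr h⟩
      invFun := Sum.elim (fun q => q.val) (fun q => q.val.symm)
      left_inv := by
        intro e
        by_cases h : p e
        · simp [h]
        · simp [h]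
      right_inv := by
        rintro (q | q)
        · simp [q.property]
        · have : ¬ p q.val.symm := by rw [hps]; simpa using q.property
          simp [this] }
  have hdet : (1 + t • J G).det = ((1 + t • J G).submatrix ψ.symm ψ.symm).det :=
    (Matrix.det_submatrix_equiv_self ψ.symm _).symm
  have hentry : ∀ a b : G.Dart,
      (1 + t • J G) a b = (if a = b then 1 else 0) + t * (if b = a.symm then 1 else 0) := by
    intro a b
    simp [J, Matrix.one_apply, Matrix.add_apply]
  have hsub : (1 + t • J G).submatrix ψ.symm ψ.symm
      = fromBlocks (1 : Matrix PD PD ℂ) (t • 1) (t • 1) 1 := by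
    ext x y
    rcases x with q | q <;> rcases y with r | r
    · have h2 : r.val ≠ q.val.symm := by
        intro h
        have hq : p q.val.symm := by rw [← h]; exact r.property
        exact ((hps q.val).mp hq) q.property
      show (1 + t • J G) q.val r.val = (1 : Matrix PD PD ℂ) q r
      rw [hentry, if_neg h2, mul_zero, add_zero, Matrix.one_apply]
      by_cases hqr : q = r
      · subst hqr; simp
      · rw [if_neg (fun h => hqr (Subtype.coe_inj.mp h)), if_neg hqr]
    · have h1 : q.val ≠ r.val.symm := by
        intro h
        have hr : p r.val.symm := by rw [← h]; exact q.property
        exact ((hps r.val).mp hr) r.property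
      show (1 + t • J G) q.val r.val.symm = (t • (1 : Matrix PD PD ℂ)) q r
      rw [hentry, if_neg h1, zero_add, Matrix.smul_apply, Matrix.one_apply, smul_eq_mul]
      by_cases hqr : q = r
      · subst hqr; simp
      · have h3 : r.val.symm ≠ q.val.symm := by
          intro h
          have := congrArg Dart.symm h
          simp only [Dart.symm_symm] at this
          exact hqr (Subtype.coe_inj.mp this).symm
        rw [if_neg h3, if_neg hqr, mul_zero]
    · have h1 : q.val.symm ≠ r.val := by
        intro h
        have hq : p q.val.symm := by rw [h]; exact r.property
        exact ((hps q.val).mp hq) q.property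
      show (1 + t • J G) q.val.symm r.val = (t • (1 : Matrix PD PD ℂ)) q r
      rw [hentry, if_neg h1, zero_add, Matrix.smul_apply, Matrix.one_apply, smul_eq_mul,
        Dart.symm_symm]
      by_cases hqr : q = r
      · subst hqr; simp
      · rw [if_neg (fun h => hqr (Subtype.coe_inj.mp h).symm), if_neg hqr, mul_zero]
    · have h2 : r.val.symm ≠ q.val.symm.symm := by
        intro h
        rw [Dart.symm_symm] at h
        have hr : p r.val.symm := by rw [h]; exact q.property
        exact ((hps r.val).mp hr) r.property
      show (1 + t • J G) q.val.symm r.val.symm = (1 : Matrix PD PD ℂ) q r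
      rw [hentry, if_neg h2, mul_zero, add_zero, Matrix.one_apply]
      by_cases hqr : q = r
      · subst hqr; simp
      · have h3 : q.val.symm ≠ r.val.symm := by
          intro h
          have := congrArg Dart.symm h
          simp only [Dart.symm_symm] at this
          exact hqr (Subtype.coe_inj.mp this)
        rw [if_neg h3, if_neg hqr]
  have hcard : Fintype.card PD = G.edgeFinset.card := by
    have h1 : Fintype.card G.Dart = Fintype.card (PD ⊕ PD) := Fintype.card_congr ψ
    rw [Fintype.card_sum] at h1
    have h2 := G.dart_card_eq_twice_card_edges
    omega
  rw [hdet, hsub, det_fromBlocks_one₁₁]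
  have h4 : (1 : Matrix PD PD ℂ) - t • 1 * (t • 1) = (1 - t ^ 2) • 1 := by
    rw [Matrix.smul_mul, Matrix.mul_smul, one_mul, smul_smul, sub_smul, one_smul, sq]
  rw [h4, Matrix.det_smul, det_one, mul_one, hcard]


lemma pointwise (hdeg : ∀ v : V, 2 ≤ G.degree v) (t : ℂ) (ht : (1 : ℂ) - t ^ 2 ≠ 0) :
    ((1 : Matrix G.Dart G.Dart ℂ) - t • posSupport ℂ (quantumUR G)).det =
      (1 - t ^ 2) ^ (G.edgeFinset.card - Fintype.card V) *
        ((1 : Matrix V V ℂ) - t • G.adjMatrix ℂ +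
          (t ^ 2) • ((Matrix.diagonal fun v => (G.degree v : ℂ)) - 1)).det := by
  classical
  set n := Fintype.card V with hn
  set m := G.edgeFinset.card with hm
  have hmn : n ≤ m := by
    have h1 := G.sum_degrees_eq_twice_card_edges
    have h2 : (2 : ℕ) * n ≤ ∑ v, G.degree v := by
      calc 2 * n = ∑ _v : V, 2 := by
            rw [Finset.sum_const, Finset.card_univ, smul_eq_mul, mul_comm]
        _ ≤ ∑ v, G.degree v := Finset.sum_le_sum fun v _ => hdeg v
    omega
  set c : ℂ := (1 - t ^ 2)⁻¹ with hcdef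
  have hc : c * (1 - t ^ 2) = 1 := inv_mul_cancel₀ ht
  set A := G.adjMatrix ℂ with hA
  set Dg : Matrix V V ℂ := Matrix.diagonal fun v => (G.degree v : ℂ) with hDg
  rw [hB G hdeg]
  have e1 : (1 : Matrix G.Dart G.Dart ℂ) - t • (K G * (L G)ᵀ - J G)
      = (1 + t • J G) - (t • K G) * (L G)ᵀ := by
    rw [smul_sub, Matrix.smul_mul]; abel
  rw [e1]
  have hJJ : (t • J G) * (t • J G) = (t ^ 2) • (1 : Matrix G.Dart G.Dart ℂ) := by
    rw [Matrix.smul_mul, Matrix.mul_smul, JJ, smul_smul, sq]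
  have hPQ : (1 + t • J G) * (1 - t • J G) = (1 - t ^ 2) • (1 : Matrix G.Dart G.Dart ℂ) := by
    rw [Matrix.mul_sub, Matrix.mul_one, Matrix.add_mul, Matrix.one_mul, hJJ, sub_smul, one_smul]
    abel
  have hPc : (1 + t • J G) * (c • (1 - t • J G)) = 1 := by
    rw [Matrix.mul_smul, hPQ, smul_smul, hc, one_smul]
  have e2 : (1 + t • J G) - (t • K G) * (L G)ᵀ
      = (1 + t • J G) * (1 - (c • (1 - t • J G)) * ((t • K G) * (L G)ᵀ)) := by
    rw [Matrix.mul_sub, Matrix.mul_one, ← Matrix.mul_assoc, hPc, Matrix.one_mul]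
  rw [e2, det_mul, detJ]
  rw [show ((c • (1 - t • J G)) * ((t • K G) * (L G)ᵀ))
      = ((c • (1 - t • J G)) * (t • K G)) * (L G)ᵀ from (Matrix.mul_assoc _ _ _).symm]
  rw [det_one_sub_mul_comm]
  have e4 : (L G)ᵀ * ((c • (1 - t • J G)) * (t • K G)) = c • (t • A - (t ^ 2) • Dg) := by
    have h5 : (1 - t • J G) * (t • K G) = t • K G - (t ^ 2) • L G := by
      rw [Matrix.sub_mul, Matrix.one_mul, Matrix.smul_mul, Matrix.mul_smul, JK, smul_smul, sq]
    rw [Matrix.smul_mul, h5, Matrix.mul_smul, Matrix.mul_sub, Matrix.mul_smul, Matrix.mul_smul,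
      LtK, LtL, ← hA, ← hDg]
  rw [e4]
  have e5 : ((1 : Matrix V V ℂ) - t • A + (t ^ 2) • (Dg - 1))
      = (1 - t ^ 2) • ((1 : Matrix V V ℂ) - c • (t • A - (t ^ 2) • Dg)) := by
    rw [smul_sub ((1 : ℂ) - t ^ 2), smul_smul, mul_comm ((1 : ℂ) - t ^ 2) c, hc, one_smul]
    rw [smul_sub (t ^ 2)]
    rw [sub_smul, one_smul]
    abel
  have e6 : ((1 : Matrix V V ℂ) - t • A + (t ^ 2) • (Dg - 1)).det
      = (1 - t ^ 2) ^ n * ((1 : Matrix V V ℂ) - c • (t • A - (t ^ 2) • Dg)).det := by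
    rw [e5, Matrix.det_smul, hn]
  rw [e6, ← mul_assoc, ← pow_add, Nat.sub_add_cancel hmn]

end IBaux

theorem stmt14 {V : Type*} [Fintype V] [DecidableEq V] (G : SimpleGraph V)
    [DecidableRel G.Adj] (hconn : G.Connected) (hdeg : ∀ v : V, 2 ≤ G.degree v)
    (t : ℂ) :
    ((1 : Matrix G.Dart G.Dart ℂ) - t • posSupport ℂ (quantumUR G)).det =
      (1 - t ^ 2) ^ (G.edgeFinset.card - Fintype.card V) *
        ((1 : Matrix V V ℂ) - t • G.adjMatrix ℂ +
          (t ^ 2) • ((Matrix.diagonal fun v => (G.degree v : ℂ)) - 1)).det := by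
  classical
  set p : ℂ[X] :=
    ((1 : Matrix G.Dart G.Dart ℂ[X]) - (X : ℂ[X]) • posSupport ℂ[X] (quantumUR G)).det with hp
  set q : ℂ[X] :=
    (1 - (X : ℂ[X]) ^ 2) ^ (G.edgeFinset.card - Fintype.card V) *
      ((1 : Matrix V V ℂ[X]) - (X : ℂ[X]) • G.adjMatrix ℂ[X] +
        ((X : ℂ[X]) ^ 2) • ((Matrix.diagonal fun v => (G.degree v : ℂ[X])) - 1)).det with hq
  have hevp : ∀ s : ℂ, eval s p =
      ((1 : Matrix G.Dart G.Dart ℂ) - s • posSupport ℂ (quantumUR G)).det := by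
    intro s
    have h1 : eval s p = (((1 : Matrix G.Dart G.Dart ℂ[X]) -
        (X : ℂ[X]) • posSupport ℂ[X] (quantumUR G)).map (evalRingHom s)).det :=
      RingHom.map_det (evalRingHom s) _
    rw [h1]
    congr 1
    ext i j
    simp [Matrix.map_apply, Matrix.sub_apply, Matrix.smul_apply, Matrix.one_apply, posSupport,
      apply_ite (eval s), smul_eq_mul]
  have hevq : ∀ s : ℂ, eval s q =
      (1 - s ^ 2) ^ (G.edgeFinset.card - Fintype.card V) *
        ((1 : Matrix V V ℂ) - s • G.adjMatrix ℂ +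
          (s ^ 2) • ((Matrix.diagonal fun v => (G.degree v : ℂ)) - 1)).det := by
    intro s
    have h1 : eval s q = eval s ((1 - (X : ℂ[X]) ^ 2) ^ (G.edgeFinset.card - Fintype.card V)) *
        eval s ((((1 : Matrix V V ℂ[X]) - (X : ℂ[X]) • G.adjMatrix ℂ[X] +
          ((X : ℂ[X]) ^ 2) • ((Matrix.diagonal fun v => (G.degree v : ℂ[X])) - 1)).det)) := by
      rw [hq, eval_mul]
    rw [h1, eval_pow, eval_sub, eval_one, eval_pow, eval_X]
    congr 1
    have h2 : eval s (((1 : Matrix V V ℂ[X]) - (X : ℂ[X]) • G.adjMatrix ℂ[X] +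
          ((X : ℂ[X]) ^ 2) • ((Matrix.diagonal fun v => (G.degree v : ℂ[X])) - 1)).det)
        = (((1 : Matrix V V ℂ[X]) - (X : ℂ[X]) • G.adjMatrix ℂ[X] +
          ((X : ℂ[X]) ^ 2) • ((Matrix.diagonal fun v => (G.degree v : ℂ[X])) - 1)).map
            (evalRingHom s)).det := by
      rw [← coe_evalRingHom, ← RingHom.mapMatrix_apply, ← RingHom.map_det]
    rw [h2]
    congr 1
    ext i j
    simp [Matrix.map_apply, Matrix.sub_apply, Matrix.add_apply, Matrix.smul_apply,
      Matrix.one_apply, Matrix.diagonal_apply, adjMatrix_apply, apply_ite (eval s), smul_eq_mul]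
  have hsub : {s : ℂ | (1 : ℂ) - s ^ 2 ≠ 0} ⊆ {s : ℂ | eval s p = eval s q} := by
    intro s hs
    simp only [Set.mem_setOf_eq] at hs ⊢
    rw [hevp, hevq]
    exact IBaux.pointwise G hdeg s hs
  have hinf : {s : ℂ | (1 : ℂ) - s ^ 2 ≠ 0}.Infinite := by
    have hfin : {s : ℂ | (1 : ℂ) - s ^ 2 ≠ 0}ᶜ.Finite := by
      apply Set.Finite.subset ((Set.finite_singleton (-1 : ℂ)).insert 1)
      intro s hs
      simp only [Set.mem_compl_iff, Set.mem_setOf_eq, not_not, sub_eq_zero] at hs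
      have h2 : (s - 1) * (s + 1) = 0 := by linear_combination -hs
      rcases mul_eq_zero.mp h2 with h | h
      · have h3 : s = 1 := by linear_combination h
        rw [h3]; exact Set.mem_insert _ _
      · have h3 : s = -1 := by linear_combination h
        rw [h3]; exact Set.mem_insert_of_mem _ rfl
    have := hfin.infinite_compl
    rwa [compl_compl] at this
  have hpq : p = q := Polynomial.eq_of_infinite_eval_eq p q (hinf.mono hsub)
  calc ((1 : Matrix G.Dart G.Dart ℂ) - t • posSupport ℂ (quantumUR G)).det
      = eval t p := (hevp t).symm
    _ = eval t q := by rw [hpq]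
    _ = _ := hevq t
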